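/- Let k ≥ 3, let d ≥ 1 and let A ⊆ ℤ^d with |A| = 3k. Then there exists a set B ⊆ A × ℤ ⊆ ℤ^{d+1} such that B is a disjoint union of copies of T_k each lying in the last coordinate direction (i.e. each copy has the form {(a, m+t) : t ∈ T_k} for some a ∈ A and m ∈ ℤ), and for every n ∈ ℤ the intersection B ∩ (A × {n}) has exactly k+1 elements if n mod 2k ∈ {1, …, k}, and exactly k−1 elements otherwise (i.e. if n ≡ k+1, …, 2k−1 or 0 (mod 2k)). -/

import Mathlib

/-- The punctured interval `T_k = {-k, …, -1, 1, …, k} ⊆ ℤ`. -/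
def puncturedInterval (k : ℕ) : Set ℤ := {t : ℤ | t ≠ 0 ∧ -(k : ℤ) ≤ t ∧ t ≤ k}

/-!
Call a level `n` high if `n mod 2k ∈ {1, …, k}`, and centre a vertical copy of `T_k` at every
low level `m`. The level `n` is then covered by the copies centred at the low levels of
`[n - k, n + k]` other than `n`. Any `2k` consecutive levels contain exactly `k` low ones, and
`n + k` is low exactly when `n` is high, which gives `k + 1` points on a high level and `k - 1` on
a low one. The copy centred at `m` goes into the column of `A` indexed by `m mod 3k`: two copies in
one column have centres at least `3k > 2k` apart, so they are disjoint.
-/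

open Finset Function

theorem Int.card_filter_Ico_add_of_periodic {p : ℤ → Prop} [DecidablePred p] {N : ℤ} (hN : 0 < N)
    (hp : Periodic p N) (a : ℤ) : #{m ∈ Ico a (a + N) | p m} = #{r ∈ Ico 0 N | p r} := by
  have hmod (b m : ℤ) : p (toIcoMod hN b m) ↔ p m := by
    rw [← self_sub_toIcoDiv_zsmul, hp.sub_zsmul_eq]
  refine card_nbij' (toIcoMod hN 0) (toIcoMod hN a) ?_ ?_ ?_ ?_
  · intro m hm
    rw [mem_coe, mem_filter, mem_Ico] at hm ⊢
    exact ⟨toIcoMod_mem_Ico' hN m, (hmod 0 m).2 hm.2⟩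
  · intro r hr
    rw [mem_coe, mem_filter, mem_Ico] at hr ⊢
    exact ⟨toIcoMod_mem_Ico hN a r, (hmod a r).2 hr.2⟩
  · intro m hm
    rw [mem_coe, mem_filter, mem_Ico] at hm
    rw [toIcoMod_toIcoMod, toIcoMod_eq_self]
    exact hm.1
  · intro r hr
    rw [mem_coe, mem_filter, mem_Ico] at hr
    rw [toIcoMod_toIcoMod, toIcoMod_eq_self, zero_add]
    exact hr.1

section Levels

variable (k : ℕ)

def IsHighLevel (n : ℤ) : Prop := 1 ≤ n % (2 * (k : ℤ)) ∧ n % (2 * (k : ℤ)) ≤ k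

instance : DecidablePred (IsHighLevel k) := fun _ => inferInstanceAs (Decidable (_ ∧ _))

variable {k}

theorem isHighLevel_add_iff (hk : 0 < k) (n : ℤ) : IsHighLevel k (n + k) ↔ ¬IsHighLevel k n := by
  have h2k : (0 : ℤ) < 2 * k := by omega
  obtain ⟨hn_eq, hr_nonneg, hr_lt⟩ := (Int.ediv_emod_unique (a := n) h2k).1 ⟨rfl, rfl⟩
  unfold IsHighLevel
  by_cases hn : n % (2 * (k : ℤ)) < k
  · rw [(Int.ediv_emod_unique h2k (r := n % (2 * k) + k) (q := n / (2 * k))).2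
      ⟨by linarith, by omega, by omega⟩ |>.2]
    omega
  · rw [(Int.ediv_emod_unique h2k (r := n % (2 * k) - k) (q := n / (2 * k) + 1)).2
      ⟨by linarith, by omega, by omega⟩ |>.2]
    omega

theorem card_filter_Ico_not_isHighLevel (hk : 0 < k) (a : ℤ) :
    #{m ∈ Ico a (a + 2 * k) | ¬IsHighLevel k m} = k := by
  rw [Int.card_filter_Ico_add_of_periodic (by omega) ?periodic]
  case periodic => intro m; simp [IsHighLevel]
  have hhigh : {r ∈ Ico 0 (2 * (k : ℤ)) | IsHighLevel k r} = Icc 1 (k : ℤ) := by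
    ext r
    rw [mem_filter, mem_Ico, mem_Icc]
    unfold IsHighLevel
    constructor
    · rintro ⟨⟨h0, h1⟩, h⟩
      rwa [Int.emod_eq_of_lt h0 h1] at h
    · rintro h
      rw [Int.emod_eq_of_lt (by omega) (by omega)]
      omega
  have hsplit := card_filter_add_card_filter_not (s := Ico 0 (2 * (k : ℤ))) (IsHighLevel k)
  rw [hhigh, Int.card_Icc, Int.card_Ico] at hsplit
  omega

theorem card_filter_Icc_not_isHighLevel_ne (hk : 0 < k) (n : ℤ) :
    #{m ∈ Icc (n - k) (n + k) | ¬IsHighLevel k m ∧ m ≠ n} =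
      if IsHighLevel k n then k + 1 else k - 1 := by
  have hwindow := card_filter_Ico_not_isHighLevel hk (n - k)
  rw [show n - k + 2 * k = n + k by ring] at hwindow
  have herase : {m ∈ Icc (n - k) (n + k) | ¬IsHighLevel k m ∧ m ≠ n} =
      ({m ∈ insert (n + k : ℤ) (Ico (n - k) (n + k)) | ¬IsHighLevel k m}).erase n := by
    rw [Ico_insert_right (by omega)]
    ext m
    simp only [mem_filter, mem_erase]
    tauto
  rw [herase, filter_insert]
  by_cases hn : IsHighLevel k n
  · rw [if_pos ((isHighLevel_add_iff hk n).not_left.2 hn), if_pos hn,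
      erase_eq_of_notMem (by simp [hn]; omega), card_insert_of_notMem (by simp), hwindow]
  · rw [if_neg (not_not.2 ((isHighLevel_add_iff hk n).2 hn)), if_neg hn,
      card_erase_of_mem (by simp [hn]; omega), hwindow]

end Levels

section Copies

variable {α : Type*} (k : ℕ)

def verticalCopy (a : α) (m : ℤ) : Set (α × ℤ) := (fun t : ℤ => (a, m + t)) '' puncturedInterval k

variable {k}

theorem mem_verticalCopy {a : α} {m : ℤ} {p : α × ℤ} :
    p ∈ verticalCopy k a m ↔ p.1 = a ∧ p.2 ≠ m ∧ |p.2 - m| ≤ k := by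
  constructor
  · rintro ⟨t, ⟨ht0, htl, htu⟩, rfl⟩
    refine ⟨rfl, by simpa using ht0, ?_⟩
    simpa [abs_le] using ⟨htl, htu⟩
  · rintro ⟨h1, h2, h3⟩
    rw [abs_le] at h3
    refine ⟨p.2 - m, ⟨sub_ne_zero.2 h2, by linarith, by linarith⟩, ?_⟩
    ext <;> simp [h1]

theorem disjoint_verticalCopy {a : α} {m m' : ℤ} (h : 2 * (k : ℤ) < |m - m'|) (a' : α) :
    Disjoint (verticalCopy k a m) (verticalCopy k a' m') := by
  rw [Set.disjoint_left]
  intro p hp hp'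
  rw [mem_verticalCopy, abs_le] at hp hp'
  rw [lt_abs] at h
  omega

theorem disjoint_verticalCopy_of_ne {a a' : α} (h : a ≠ a') (m m' : ℤ) :
    Disjoint (verticalCopy k a m) (verticalCopy k a' m') := by
  rw [Set.disjoint_left]
  intro p hp hp'
  exact h ((mem_verticalCopy.1 hp).1.symm.trans (mem_verticalCopy.1 hp').1)

variable (k) in
def towerCopies (c : ℤ → α) : Set (Set (α × ℤ)) :=
  (fun m => verticalCopy k (c m) m) '' {m | ¬IsHighLevel k m}

variable {c : ℤ → α}

theorem pairwiseDisjoint_towerCopies (hc : ∀ m m', c m = c m' → |m - m'| ≤ 2 * k → m = m') :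
    (towerCopies k c).PairwiseDisjoint id := by
  rintro _ ⟨m, -, rfl⟩ _ ⟨m', -, rfl⟩ hne
  by_cases hcol : c m = c m'
  · exact disjoint_verticalCopy (not_le.1 fun h => hne (by rw [hc m m' hcol h])) _
  · exact disjoint_verticalCopy_of_ne hcol m m'

theorem sUnion_towerCopies_subset {A : Set α} (hcA : ∀ m, c m ∈ A) :
    ⋃₀ towerCopies k c ⊆ A ×ˢ Set.univ := by
  rintro p ⟨_, ⟨m, -, rfl⟩, hp⟩
  exact ⟨(mem_verticalCopy.1 hp).1 ▸ hcA m, trivial⟩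

theorem sUnion_towerCopies_inter_level {A : Set α} (hcA : ∀ m, c m ∈ A) (n : ℤ) :
    ⋃₀ towerCopies k c ∩ A ×ˢ {n} =
      (fun m => (c m, n)) '' ↑{m ∈ Icc (n - k) (n + k) | ¬IsHighLevel k m ∧ m ≠ n} := by
  ext ⟨a, l⟩
  simp only [towerCopies, Set.sUnion_image, Set.mem_inter_iff, Set.mem_iUnion, mem_verticalCopy,
    Set.mem_prod, Set.mem_singleton_iff, coe_filter, mem_Icc, Set.mem_image, Prod.mk.injEq,
    abs_le]
  constructor
  · rintro ⟨⟨m, hm, rfl, hne, hl, hu⟩, -, rfl⟩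
    exact ⟨m, ⟨⟨by linarith, by linarith⟩, hm, Ne.symm hne⟩, rfl, rfl⟩
  · rintro ⟨m, ⟨⟨hl, hu⟩, hm, hne⟩, rfl, rfl⟩
    exact ⟨⟨m, hm, rfl, Ne.symm hne, by linarith, by linarith⟩, hcA m, rfl⟩

theorem ncard_sUnion_towerCopies_inter_level (hk : 0 < k)
    (hc : ∀ m m', c m = c m' → |m - m'| ≤ 2 * k → m = m') {A : Set α} (hcA : ∀ m, c m ∈ A)
    (n : ℤ) : (⋃₀ towerCopies k c ∩ A ×ˢ {n}).ncard = if IsHighLevel k n then k + 1 else k - 1 := by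
  rw [sUnion_towerCopies_inter_level hcA, Set.InjOn.ncard_image, Set.ncard_coe_finset,
    card_filter_Icc_not_isHighLevel_ne hk]
  intro m hm m' hm' heq
  simp only [mem_coe, mem_filter, mem_Icc] at hm hm'
  exact hc m m' (congrArg Prod.fst heq) (by rw [abs_le]; constructor <;> linarith)

end Copies

theorem Set.nonempty_zmod_equiv_of_ncard_eq {α : Type*} {A : Set α} {N : ℕ} (hN : N ≠ 0)
    (hA : A.ncard = N) : Nonempty (ZMod N ≃ A) := by
  have : NeZero N := ⟨hN⟩
  have : Finite A := (Set.finite_of_ncard_ne_zero (hA ▸ hN)).to_subtype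
  exact Finite.card_eq.1 (by rw [Nat.card_zmod, Nat.card_coe_set_eq, hA])

theorem Int.eq_of_cast_zmod_eq_of_abs_sub_lt {N : ℕ} {m m' : ℤ} (h : (m : ZMod N) = m')
    (hlt : |m - m'| < N) : m = m' := by
  rw [ZMod.intCast_eq_intCast_iff_dvd_sub] at h
  rw [abs_sub_comm] at hlt
  linarith [Int.eq_zero_of_abs_lt_dvd h hlt]

theorem exists_B_levels_general (k : ℕ) (hk : 3 ≤ k) (d : ℕ)
    (A : Set (Fin d → ℤ)) (hA : A.ncard = 3 * k) :
    ∃ B : Set ((Fin d → ℤ) × ℤ),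
      B ⊆ A ×ˢ (Set.univ : Set ℤ) ∧
      (∃ 𝒞 : Set (Set ((Fin d → ℤ) × ℤ)),
        (∀ C ∈ 𝒞, ∃ a ∈ A, ∃ m : ℤ,
          C = (fun t : ℤ => (a, m + t)) '' puncturedInterval k) ∧
        𝒞.PairwiseDisjoint id ∧ ⋃₀ 𝒞 = B) ∧
      ∀ n : ℤ, (B ∩ A ×ˢ ({n} : Set ℤ)).ncard =
        if 1 ≤ n % (2 * (k : ℤ)) ∧ n % (2 * (k : ℤ)) ≤ (k : ℤ) then k + 1 else k - 1 := by
  obtain ⟨e⟩ := Set.nonempty_zmod_equiv_of_ncard_eq (by omega) hA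
  let c : ℤ → Fin d → ℤ := fun m => e m
  have hcA (m : ℤ) : c m ∈ A := (e m).2
  have hc (m m' : ℤ) (h : c m = c m') (hle : |m - m'| ≤ 2 * k) : m = m' :=
    Int.eq_of_cast_zmod_eq_of_abs_sub_lt (e.injective (Subtype.ext h)) (by push_cast; omega)
  refine ⟨⋃₀ towerCopies k c, sUnion_towerCopies_subset hcA,
    ⟨towerCopies k c, ?_, pairwiseDisjoint_towerCopies hc, rfl⟩,
    ncard_sUnion_towerCopies_inter_level (by omega) hc hcA⟩
  rintro _ ⟨m, -, rfl⟩
  exact ⟨c m, hcA m, m, rfl⟩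

/-- Lemma 4 of the paper: given `A ⊆ ℤ^d` with `|A| = 3k`, there is a set
`B ⊆ A × ℤ` which is a disjoint union of copies of `T_k` in the last coordinate
direction and meets the slice `A × {n}` in exactly `k+1` points when
`n mod 2k ∈ {1, …, k}` and in exactly `k-1` points otherwise. -/
theorem exists_B_levels (k : ℕ) (hk : 3 ≤ k) (d : ℕ) (hd : 1 ≤ d)
    (A : Set (Fin d → ℤ)) (hA : A.ncard = 3 * k) :
    ∃ B : Set ((Fin d → ℤ) × ℤ),
      B ⊆ A ×ˢ (Set.univ : Set ℤ) ∧
      (∃ 𝒞 : Set (Set ((Fin d → ℤ) × ℤ)),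
        (∀ C ∈ 𝒞, ∃ a ∈ A, ∃ m : ℤ,
          C = (fun t : ℤ => (a, m + t)) '' puncturedInterval k) ∧
        𝒞.PairwiseDisjoint id ∧ ⋃₀ 𝒞 = B) ∧
      ∀ n : ℤ, (B ∩ A ×ˢ ({n} : Set ℤ)).ncard =
        if 1 ≤ n % (2 * (k : ℤ)) ∧ n % (2 * (k : ℤ)) ≤ (k : ℤ) then k + 1 else k - 1 :=
  exists_B_levels_general k hk d A hA
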